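/- arXiv:2211.05173 — 2 statements merged into one kernel-verified Lean document; each statement's English description precedes it below -/
import Mathlib

section
/- Let μ be a closure operator on 2^U (U finite) and C a closed set. If α and β are two nonredundant covers of μ, then the top restriction α_{=C} = {(S,Sμ) ∈ α | Sμ = C} is empty if and only if β_{=C} is empty. -/
/-!
Call `Z` closed under a set of pairs `δ` if `p.1 ⊆ Z` implies `p.2 ⊆ Z` for every `p ∈ δ`.
On a finite universe `extC δ X` is the least `δ`-closed superset of `X`, so for a cover `α`
of `μ` the `α`-closed sets are exactly the `μ`-closed ones.

Let `q ∈ β` with `q.2 = C` and `β' = β \ {q}`. Nonredundancy of `β` gives a `β'`-closed set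
`Y` that is not `μ`-closed, i.e. `q.1 ⊆ Y` but `C ⊄ Y`. Then `W = Y ∩ C` is `β'`-closed with
`μ W = C ≠ W`. If no pair of `α` had second coordinate `C`, `W` would be `α`-closed: for
`p ∈ α` with `p.1 ⊆ W` we have `p.2 ⊊ C`, so `q` cannot fire while `β'` closes `p.1`, and
`p.2 = extC β' p.1 ⊆ W`. This contradicts `μ W ≠ W`.
-/

open Set

variable {U : Type*}

/-- A closure operator on the power set of `U`: inclusion, monotonicity, idempotence. -/
def IsClosure (μ : Set U → Set U) : Prop :=
  (∀ X, X ⊆ μ X) ∧ (∀ X Y : Set U, X ⊆ Y → μ X ⊆ μ Y) ∧ (∀ X, μ (μ X) = μ X)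

/-- `K` is a key of `μ`: no proper subset of `K` has the same closure. -/
def IsKey (μ : Set U → Set U) (K : Set U) : Prop :=
  ∀ S : Set U, S ⊂ K → μ S ≠ μ K

/-- One step of the Extension-by-Closure recurrence for a set of pairs `α`. -/
def ecStep (α : Set (Set U × Set U)) (X : Set U) : Set U :=
  X ∪ ⋃ p ∈ {q ∈ α | q.1 ⊆ X}, p.2

/-- The iterates `Xα_t` of the Extension-by-Closure recurrence. -/
def ecIter (α : Set (Set U × Set U)) (X : Set U) : ℕ → Set U
  | 0 => X
  | n + 1 => ecStep α (ecIter α X n)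

/-- `Xα⁺`: the eventual stable value of the increasing recurrence
(for finite `U` the union over all iterates is the stable limit). -/
def extC (α : Set (Set U × Set U)) : Set U → Set U :=
  fun X => ⋃ n, ecIter α X n

/-- The closure `μ` viewed as a set of pairs `(X, Xμ)`. -/
def graphOf (μ : Set U → Set U) : Set (Set U × Set U) :=
  {p | p.2 = μ p.1}

/-- `α` is a cover of `μ`: a subset of `μ` (as pairs) with `α⁺ = μ`. -/
def IsCover (μ : Set U → Set U) (α : Set (Set U × Set U)) : Prop :=
  α ⊆ graphOf μ ∧ extC α = μ

/-- A nonredundant cover of `μ`: a cover no proper subset of which has closure `μ`. -/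
def NonredundantCover (μ : Set U → Set U) (α : Set (Set U × Set U)) : Prop :=
  IsCover μ α ∧ ∀ β : Set (Set U × Set U), β ⊂ α → extC β ≠ μ

def IsClosedUnder (δ : Set (Set U × Set U)) (Z : Set U) : Prop :=
  ∀ p ∈ δ, p.1 ⊆ Z → p.2 ⊆ Z

section ClosedUnder

variable {δ δ' : Set (Set U × Set U)} {X Z : Set U}

theorem IsClosedUnder.anti (h : δ ⊆ δ') (hZ : IsClosedUnder δ' Z) : IsClosedUnder δ Z :=
  fun p hp => hZ p (h hp)

theorem IsClosedUnder.inter {Z' : Set U} (hZ : IsClosedUnder δ Z) (hZ' : IsClosedUnder δ Z') :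
    IsClosedUnder δ (Z ∩ Z') :=
  fun p hp h => subset_inter (hZ p hp (h.trans inter_subset_left))
    (hZ' p hp (h.trans inter_subset_right))

theorem IsClosedUnder.of_diff_singleton {q : Set U × Set U}
    (hZ : IsClosedUnder (δ \ {q}) Z) (hq : q.1 ⊆ Z → q.2 ⊆ Z) : IsClosedUnder δ Z := by
  intro p hp
  by_cases hpq : p = q
  · exact hpq ▸ hq
  · exact hZ p ⟨hp, hpq⟩

theorem ecIter_subset (hX : X ⊆ Z) (hZ : IsClosedUnder δ Z) : ∀ n, ecIter δ X n ⊆ Z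
  | 0 => hX
  | n + 1 => union_subset (ecIter_subset hX hZ n) <|
      iUnion₂_subset fun p hp => hZ p hp.1 (hp.2.trans (ecIter_subset hX hZ n))

theorem extC_subset (hX : X ⊆ Z) (hZ : IsClosedUnder δ Z) : extC δ X ⊆ Z :=
  iUnion_subset (ecIter_subset hX hZ)

theorem subset_extC : X ⊆ extC δ X :=
  subset_iUnion (ecIter δ X) 0

theorem monotone_ecIter : Monotone (ecIter δ X) :=
  monotone_nat_of_le_succ fun _ => subset_union_left

theorem isClosedUnder_extC [Finite U] : IsClosedUnder δ (extC δ X) := by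
  intro p hp hsub
  have hfin := p.1.toFinite
  rw [← hfin.coe_toFinset] at hsub
  obtain ⟨n, hn⟩ := monotone_ecIter.directed_le.exists_mem_subset_of_finset_subset_biUnion hsub
  rw [hfin.coe_toFinset] at hn
  have hfires : p ∈ {q ∈ δ | q.1 ⊆ ecIter δ X n} := ⟨hp, hn⟩
  exact (subset_biUnion_of_mem (u := Prod.snd) hfires).trans
    (subset_union_right.trans (subset_iUnion (ecIter δ X) (n + 1)))

theorem extC_eq_self_iff [Finite U] : extC δ Z = Z ↔ IsClosedUnder δ Z :=
  ⟨fun h => h ▸ isClosedUnder_extC, fun h => (extC_subset subset_rfl h).antisymm subset_extC⟩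

theorem extC_subset_extC_of_isClosedUnder [Finite U]
    (h : ∀ Z, IsClosedUnder δ Z → IsClosedUnder δ' Z) : extC δ' X ⊆ extC δ X :=
  extC_subset subset_extC (h _ isClosedUnder_extC)

theorem extC_mono [Finite U] (h : δ ⊆ δ') : extC δ X ⊆ extC δ' X :=
  extC_subset_extC_of_isClosedUnder fun _ hZ => hZ.anti h

end ClosedUnder

namespace IsCover

variable {μ : Set U → Set U} {α : Set (Set U × Set U)}

theorem subset_apply (hα : IsCover μ α) (X : Set U) : X ⊆ μ X :=
  hα.2 ▸ subset_extC

theorem monotone [Finite U] (hα : IsCover μ α) : Monotone μ := fun _ _ h =>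
  hα.2 ▸ extC_subset (h.trans subset_extC) isClosedUnder_extC

theorem isClosedUnder_iff [Finite U] (hα : IsCover μ α) {Z : Set U} :
    IsClosedUnder α Z ↔ μ Z = Z := by
  rw [← hα.2, extC_eq_self_iff]

theorem apply_apply [Finite U] (hα : IsCover μ α) (X : Set U) : μ (μ X) = μ X :=
  hα.isClosedUnder_iff.1 (hα.2 ▸ isClosedUnder_extC)

theorem apply_fst_eq_snd (hα : IsCover μ α) {p : Set U × Set U} (hp : p ∈ α) :
    μ p.1 = p.2 :=
  (hα.1 hp).symm

end IsCover

namespace NonredundantCover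

variable {μ : Set U → Set U} {β : Set (Set U × Set U)}

theorem exists_isClosedUnder_diff_singleton [Finite U] (hβ : NonredundantCover μ β)
    {q : Set U × Set U} (hq : q ∈ β) : ∃ Y, IsClosedUnder (β \ {q}) Y ∧ μ Y ≠ Y := by
  by_contra! h
  refine hβ.2 _ (sdiff_singleton_ssubset.2 hq) (hβ.1.2 ▸ funext fun X => ?_)
  refine (extC_mono sdiff_subset).antisymm (extC_subset_extC_of_isClosedUnder fun Z hZ => ?_)
  exact hβ.1.isClosedUnder_iff.2 (h Z hZ)

theorem exists_mem_snd_eq [Finite U] {α : Set (Set U × Set U)} (hα : IsCover μ α)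
    (hβ : NonredundantCover μ β) {q : Set U × Set U} (hq : q ∈ β) :
    ∃ p ∈ α, p.2 = q.2 := by
  by_contra! hαC
  set C := q.2
  obtain ⟨Y, hY, hμY⟩ := hβ.exists_isClosedUnder_diff_singleton hq
  have hqY : q.1 ⊆ Y ∧ ¬ C ⊆ Y := by
    by_contra! h
    exact hμY (hβ.1.isClosedUnder_iff.1 (hY.of_diff_singleton h))
  have hμq : μ q.1 = C := hβ.1.apply_fst_eq_snd hq
  have hμC : μ C = C := hμq ▸ hβ.1.apply_apply q.1
  have hC : IsClosedUnder (β \ {q}) C := (hβ.1.isClosedUnder_iff.2 hμC).anti sdiff_subset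
  set W := Y ∩ C
  have hμW : μ W = C :=
    ((hβ.1.monotone inter_subset_right).trans_eq hμC).antisymm <|
      hμq ▸ hβ.1.monotone (subset_inter hqY.1 (hμq ▸ hβ.1.subset_apply q.1))
  have hW : IsClosedUnder α W := by
    intro p hp hpW
    have hμp : μ p.1 = p.2 := hα.apply_fst_eq_snd hp
    have hpC : p.2 ⊂ C := (hμp ▸ hμW ▸ hβ.1.monotone hpW).ssubset_of_ne (hαC p hp)
    set V := extC (β \ {q}) p.1
    have hVp : V ⊆ p.2 := hμp ▸ hβ.1.2 ▸ extC_mono sdiff_subset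
    have hqV : ¬ q.1 ⊆ V := fun h => hpC.not_subset <| calc
      C = μ q.1 := hμq.symm
      _ ⊆ μ p.2 := hβ.1.monotone (h.trans hVp)
      _ = p.2 := by rw [← hμp, hβ.1.apply_apply]
    have hV : IsClosedUnder β V := isClosedUnder_extC.of_diff_singleton fun h => absurd h hqV
    calc p.2 = μ p.1 := hμp.symm
      _ ⊆ μ V := hβ.1.monotone subset_extC
      _ = V := hβ.1.isClosedUnder_iff.1 hV
      _ ⊆ W := extC_subset hpW (hY.inter hC)
  exact hqY.2 (hμW ▸ (hα.isClosedUnder_iff.1 hW).le.trans inter_subset_left)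

end NonredundantCover

theorem top_empty_iff_general [Finite U] (μ : Set U → Set U)
    (C : Set U) (α β : Set (Set U × Set U))
    (hα : NonredundantCover μ α) (hβ : NonredundantCover μ β) :
    {p ∈ α | p.2 = C} = ∅ ↔ {p ∈ β | p.2 = C} = ∅ := by
  have top_nonempty {γ δ : Set (Set U × Set U)} (hγ : IsCover μ γ)
      (hδ : NonredundantCover μ δ) :
      {p ∈ δ | p.2 = C}.Nonempty → {p ∈ γ | p.2 = C}.Nonempty :=
    fun ⟨q, hq, hqC⟩ => hqC ▸ hδ.exists_mem_snd_eq hγ hq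
  simp only [← not_nonempty_iff_eq_empty]
  exact not_congr ⟨top_nonempty hβ.1 hα, top_nonempty hα.1 hβ⟩

theorem top_empty_iff [Finite U] (μ : Set U → Set U) (hμ : IsClosure μ)
    (C : Set U) (hC : μ C = C) (α β : Set (Set U × Set U))
    (hα : NonredundantCover μ α) (hβ : NonredundantCover μ β) :
    {p ∈ α | p.2 = C} = ∅ ↔ {p ∈ β | p.2 = C} = ∅ :=
  top_empty_iff_general μ C α β hα hβ
end

section
/- Let μ be a closure operator on 2^U (U finite) and α, β nonredundant covers of μ. If (X, C) ∈ α, (Y, C) ∈ β, X ≠ Y, and X →̇ Y, then γ = (α \ {(X,C)}) ∪ {(Y,C)} is also a cover of μ: γ⁺ = μ. Moreover |γ| = |α|, so γ is a nonredundant cover (exchange property). -/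
open Set

variable {U : Type*}

/-!
Write `δ` for the pairs `(Z, Zμ)` with `Zμ ⊂ C`. Removing a pair `(Z, C)` from a cover of `μ`
does not change the closure of any set whose `μ`-closure misses `C`, since `Z` can never be
derived there; hence every pair of `δ` is derivable from a cover with `(Z, C)` removed. So
`Y ⊆ Xδ⁺ ⊆ X(α ∖ (X, C))⁺`, and firing `(Y, C)` recovers `C` from `X`: `γ` covers `μ`.
Nonredundancy of `α` makes `→̇` symmetric, `X ⊆ Yδ⁺`; exchanging backwards, any pair redundant in
`γ` would be redundant in `α` as well.
-/

section ExtensionByClosure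

variable {α ρ : Set (Set U × Set U)} {S T : Set U}

lemma mem_ecStep {x : U} : x ∈ ecStep α T ↔ x ∈ T ∨ ∃ p ∈ α, p.1 ⊆ T ∧ x ∈ p.2 := by
  simp only [ecStep, mem_union, mem_iUnion, mem_ofPred_eq, exists_prop]
  tauto

lemma ecStep_mono (hαρ : α ⊆ ρ) (hST : S ⊆ T) : ecStep α S ⊆ ecStep ρ T := by
  intro x hx
  rcases mem_ecStep.1 hx with hxS | ⟨p, hp, hp₁, hx₂⟩
  · exact mem_ecStep.2 (Or.inl (hST hxS))
  · exact mem_ecStep.2 (Or.inr ⟨p, hαρ hp, hp₁.trans hST, hx₂⟩)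

lemma ecIter_mono (hαρ : α ⊆ ρ) (hST : S ⊆ T) (n : ℕ) : ecIter α S n ⊆ ecIter ρ T n := by
  induction n with
  | zero => exact hST
  | succ n ih => exact ecStep_mono hαρ ih

lemma ecIter_monotone (α : Set (Set U × Set U)) (S : Set U) : Monotone (ecIter α S) :=
  monotone_nat_of_le_succ fun _ => subset_union_left

lemma ecIter_subset_extC (n : ℕ) : ecIter α S n ⊆ extC α S :=
  subset_iUnion (ecIter α S) n

lemma subset_extC_s18 : S ⊆ extC α S :=
  ecIter_subset_extC 0

lemma extC_mono_s18 (hαρ : α ⊆ ρ) (hST : S ⊆ T) : extC α S ⊆ extC ρ T :=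
  iUnion_subset fun n => (ecIter_mono hαρ hST n).trans (ecIter_subset_extC n)

lemma extC_subset_of_closed (hST : S ⊆ T) (hT : ∀ p ∈ α, p.1 ⊆ T → p.2 ⊆ T) :
    extC α S ⊆ T := by
  refine iUnion_subset fun n => ?_
  induction n with
  | zero => exact hST
  | succ n ih =>
    intro x hx
    rcases mem_ecStep.1 hx with hx | ⟨p, hp, hp₁, hx₂⟩
    · exact ih hx
    · exact hT p hp (hp₁.trans ih) hx₂

variable [Finite U]

lemma exists_extC_eq_ecIter (α : Set (Set U × Set U)) (S : Set U) :
    ∃ N, extC α S = ecIter α S N := by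
  obtain ⟨N, hN⟩ := WellFoundedGT.monotone_chain_condition ⟨ecIter α S, ecIter_monotone α S⟩
  refine ⟨N, subset_antisymm (iUnion_subset fun n => ?_) (ecIter_subset_extC N)⟩
  rcases le_total n N with hn | hn
  · exact ecIter_monotone α S hn
  · exact (hN n hn).symm.subset

lemma subset_extC_of_mem {p : Set U × Set U} (hp : p ∈ α) (hp₁ : p.1 ⊆ extC α S) :
    p.2 ⊆ extC α S := by
  obtain ⟨N, hN⟩ := exists_extC_eq_ecIter α S
  have hfire : p.2 ⊆ ecIter α S (N + 1) :=
    fun x hx => mem_ecStep.2 (Or.inr ⟨p, hp, hN ▸ hp₁, hx⟩)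
  exact hfire.trans (ecIter_subset_extC (N + 1))

lemma extC_extC : extC α (extC α S) = extC α S :=
  subset_antisymm (extC_subset_of_closed subset_rfl fun _ => subset_extC_of_mem) subset_extC_s18

lemma extC_subset_extC_of_forall (h : ∀ p ∈ α, p.2 ⊆ extC ρ p.1) : extC α S ⊆ extC ρ S :=
  extC_subset_of_closed subset_extC_s18 fun p hp hp₁ =>
    (h p hp).trans ((extC_mono_s18 subset_rfl hp₁).trans extC_extC.subset)

lemma extC_subset_extC_diff_singleton {q : Set U × Set U} (hq : ¬ q.1 ⊆ extC (α \ {q}) S) :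
    extC α S ⊆ extC (α \ {q}) S := by
  refine extC_subset_of_closed subset_extC_s18 fun p hp hp₁ => ?_
  obtain rfl | hpq := eq_or_ne p q
  · exact absurd hp₁ hq
  · exact subset_extC_of_mem ⟨hp, hpq⟩ hp₁

end ExtensionByClosure

section Covers

variable {μ : Set U → Set U} {α ρ : Set (Set U × Set U)} {S : Set U}

lemma extC_subset_of_subset_graphOf (hμ : IsClosure μ) (hρ : ρ ⊆ graphOf μ) :
    extC ρ S ⊆ μ S :=
  extC_subset_of_closed (hμ.1 S) fun p hp hp₁ => by
    rw [show p.2 = μ p.1 from hρ hp]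
    exact (hμ.2.1 _ _ hp₁).trans (hμ.2.2 S).subset

lemma exists_mem_not_subset_of_not_closed (hα : extC α = μ) (hS : ¬ μ S ⊆ S) :
    ∃ p ∈ α, p.1 ⊆ S ∧ ¬ p.2 ⊆ S := by
  by_contra! h
  exact hS (hα ▸ extC_subset_of_closed subset_rfl h)

lemma nonredundantCover_of_forall_diff_singleton (hμ : IsClosure μ) (hα : IsCover μ α)
    (h : ∀ p ∈ α, extC (α \ {p}) ≠ μ) : NonredundantCover μ α := by
  refine ⟨hα, fun β hβ hβμ => ?_⟩
  obtain ⟨p, hpα, hpβ⟩ := exists_of_ssubset hβ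
  refine h p hpα (funext fun S => subset_antisymm
    (extC_subset_of_subset_graphOf hμ (sdiff_subset.trans hα.1)) ?_)
  rw [← hβμ]
  exact extC_mono_s18 (fun q hq => ⟨hβ.subset hq, fun hqp => hpβ (hqp ▸ hq)⟩) subset_rfl

variable [Finite U]

lemma extC_eq_of_subset_insert (hμ : IsClosure μ) (hρ : ρ ⊆ graphOf μ) (hα : extC α = μ)
    {q : Set U × Set U} (hαq : α ⊆ insert q ρ) (hq : q.2 ⊆ extC ρ q.1) : extC ρ = μ := by
  funext S
  refine subset_antisymm (extC_subset_of_subset_graphOf hμ hρ) (hα ▸ ?_)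
  refine extC_subset_extC_of_forall fun p hp => ?_
  rcases hαq hp with rfl | hpρ
  · exact hq
  · exact subset_extC_of_mem hpρ subset_extC_s18

lemma NonredundantCover.not_subset_extC_diff_singleton (hμ : IsClosure μ)
    (hα : NonredundantCover μ α) {q : Set U × Set U} (hq : q ∈ α) :
    ¬ q.2 ⊆ extC (α \ {q}) q.1 := fun hq₂ =>
  hα.2 _ (sdiff_singleton_ssubset.2 hq) <| extC_eq_of_subset_insert hμ
    (sdiff_subset.trans hα.1.1) hα.1.2 (subset_insert_sdiff_singleton q α) hq₂

/-- If `C ⊄ Sμ`, the closure of `S` never reaches `Z`, so `(Z, C)` is never fired. -/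
lemma extC_diff_singleton_eq (hμ : IsClosure μ) (hρ : IsCover μ ρ) {Z C : Set U}
    (hZ : μ Z = C) (hS : ¬ C ⊆ μ S) : extC (ρ \ {(Z, C)}) S = μ S := by
  have hsub : extC (ρ \ {(Z, C)}) S ⊆ μ S :=
    extC_subset_of_subset_graphOf hμ (sdiff_subset.trans hρ.1)
  refine subset_antisymm hsub (hρ.2 ▸ extC_subset_extC_diff_singleton fun hZS => hS ?_)
  rw [← hZ]
  exact (hμ.2.1 _ _ (hZS.trans hsub)).trans (hμ.2.2 S).subset

lemma extC_below_subset_extC_diff_singleton (hμ : IsClosure μ) (hρ : IsCover μ ρ)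
    {Z C : Set U} (hZ : μ Z = C) :
    extC {p ∈ graphOf μ | p.2 ⊂ C} S ⊆ extC (ρ \ {(Z, C)}) S :=
  extC_subset_extC_of_forall fun p ⟨hp, hpC⟩ => by
    rw [extC_diff_singleton_eq hμ hρ hZ (hp ▸ hpC.not_subset), ← hp]

/-- Symmetry of direct determination `→̇`. -/
lemma subset_extC_below_of_subset_extC_below (hμ : IsClosure μ) (hα : IsCover μ α)
    {X Y C : Set U} (hX : (X, C) ∈ α) (hXα : ¬ C ⊆ extC (α \ {(X, C)}) X) (hY : μ Y = C)
    (hXY : Y ⊆ extC {p ∈ graphOf μ | p.2 ⊂ C} X) :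
    X ⊆ extC {p ∈ graphOf μ | p.2 ⊂ C} Y := by
  set δ := {p ∈ graphOf μ | p.2 ⊂ C}
  have hXC : μ X = C := (hα.1 hX).symm
  have hδY : extC δ Y ⊆ C := hY ▸ extC_subset_of_subset_graphOf hμ (sep_subset _ _)
  by_cases hCδ : C ⊆ extC δ Y
  · exact (hXC ▸ hμ.1 X).trans hCδ
  have hopen : ¬ μ (extC δ Y) ⊆ extC δ Y := fun h =>
    hCδ (hY ▸ (hμ.2.1 _ _ subset_extC_s18).trans h)
  obtain ⟨p, hpα, hp₁, hp₂⟩ := exists_mem_not_subset_of_not_closed hα.2 hopen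
  have hpμ : p.2 = μ p.1 := hα.1 hpα
  have hpC : p.2 ⊆ C := hpμ ▸ (hμ.2.1 _ _ (hp₁.trans hδY)).trans (hXC ▸ hμ.2.2 X).subset
  obtain hpC | hpC := LE.le.ssubset_or_eq hpC
  · exact absurd (subset_extC_of_mem (show p ∈ δ from ⟨hα.1 hpα, hpC⟩) hp₁) hp₂
  by_cases hpX : p.1 = X
  · exact hpX ▸ hp₁
  have hp₁X : p.1 ⊆ extC (α \ {(X, C)}) X :=
    calc p.1 ⊆ extC δ Y := hp₁
      _ ⊆ extC δ (extC δ X) := extC_mono_s18 subset_rfl hXY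
      _ = extC δ X := extC_extC
      _ ⊆ extC (α \ {(X, C)}) X := extC_below_subset_extC_diff_singleton hμ hα hXC
  have hpα' : p ∈ α \ {(X, C)} := ⟨hpα, fun h => hpX (congrArg Prod.fst h)⟩
  have hfire := subset_extC_of_mem hpα' hp₁X
  rw [hpC] at hfire
  exact absurd hfire hXα

/-- Since `X ⊆ Yδ⁺`, the pair `(Y, C)` is derivable from `α ∖ {p}`. -/
lemma NonredundantCover.extC_ne_of_subset_insert (hμ : IsClosure μ) (hα : NonredundantCover μ α)
    {X Y C : Set U} (hX : (X, C) ∈ α) (hY : μ Y = C)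
    (hXY : X ⊆ extC {p ∈ graphOf μ | p.2 ⊂ C} Y) {p : Set U × Set U} (hp : p ∈ α)
    (hpX : p ≠ (X, C)) (hρ : ρ ⊆ insert (Y, C) (α \ {p})) : extC ρ ≠ μ := by
  intro hρμ
  have hαp : α \ {p} ⊆ graphOf μ := sdiff_subset.trans hα.1.1
  have hρg : ρ ⊆ graphOf μ := hρ.trans (insert_subset hY.symm hαp)
  have hXp : X ⊆ extC (α \ {p}) Y :=
    calc X ⊆ extC {p ∈ graphOf μ | p.2 ⊂ C} Y := hXY
      _ ⊆ extC (ρ \ {(Y, C)}) Y := extC_below_subset_extC_diff_singleton hμ ⟨hρg, hρμ⟩ hY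
      _ ⊆ extC (α \ {p}) Y := extC_mono_s18 (sdiff_singleton_subset_iff.2 hρ) subset_rfl
  have hCp : C ⊆ extC (α \ {p}) Y := subset_extC_of_mem (p := (X, C)) ⟨hX, hpX.symm⟩ hXp
  exact hα.2 _ (sdiff_singleton_ssubset.2 hp) (extC_eq_of_subset_insert hμ hαp hρμ hρ hCp)

end Covers

theorem exchange_cover_general [Finite U] (μ : Set U → Set U) (hμ : IsClosure μ)
    (α β : Set (Set U × Set U))
    (hα : NonredundantCover μ α) (hβ : NonredundantCover μ β)
    (X Y C : Set U) (hX : (X, C) ∈ α) (hY : (Y, C) ∈ β)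
    (hdd : Y ⊆ extC {p ∈ graphOf μ | p.2 ⊂ C} X) :
    IsCover μ (insert (Y, C) (α \ {(X, C)})) ∧
    (insert (Y, C) (α \ {(X, C)})).ncard = α.ncard ∧
    NonredundantCover μ (insert (Y, C) (α \ {(X, C)})) := by
  have hXC : μ X = C := (hα.1.1 hX).symm
  have hYC : μ Y = C := (hβ.1.1 hY).symm
  have hXα := hα.not_subset_extC_diff_singleton hμ hX
  have hYα : Y ⊆ extC (α \ {(X, C)}) X :=
    hdd.trans (extC_below_subset_extC_diff_singleton hμ hα.1 hXC)
  have hXY := subset_extC_below_of_subset_extC_below hμ hα.1 hX hXα hYC hdd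
  have hγg : insert (Y, C) (α \ {(X, C)}) ⊆ graphOf μ :=
    insert_subset (hβ.1.1 hY) (sdiff_subset.trans hα.1.1)
  have hγ : IsCover μ (insert (Y, C) (α \ {(X, C)})) := by
    refine ⟨hγg, extC_eq_of_subset_insert hμ hγg hα.1.2 (q := (X, C)) ?_ ?_⟩
    · exact (subset_insert_sdiff_singleton _ α).trans (insert_subset_insert (subset_insert _ _))
    · exact subset_extC_of_mem (p := (Y, C)) (mem_insert _ _)
        (hYα.trans (extC_mono_s18 (subset_insert _ _) subset_rfl))
  have hYnot : (Y, C) ∉ α \ {(X, C)} := fun h => hXα (subset_extC_of_mem (p := (Y, C)) h hYα)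
  refine ⟨hγ, by rw [ncard_insert_of_notMem hYnot, ncard_sdiff_singleton_add_one hX], ?_⟩
  refine nonredundantCover_of_forall_diff_singleton hμ hγ fun p hp => ?_
  obtain rfl | hpY := eq_or_ne p (Y, C)
  · rw [insert_sdiff_self_of_notMem hYnot]
    exact hα.2 _ (sdiff_singleton_ssubset.2 hX)
  obtain ⟨hpα, hpX⟩ := (mem_insert_iff.1 hp).resolve_left hpY
  exact hα.extC_ne_of_subset_insert hμ hX hYC hXY hpα hpX
    fun q ⟨hq, hqp⟩ => (mem_insert_iff.1 hq).imp_right fun h => ⟨h.1, hqp⟩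

theorem exchange_cover [Finite U] (μ : Set U → Set U) (hμ : IsClosure μ)
    (α β : Set (Set U × Set U))
    (hα : NonredundantCover μ α) (hβ : NonredundantCover μ β)
    (X Y C : Set U) (hX : (X, C) ∈ α) (hY : (Y, C) ∈ β) (hne : X ≠ Y)
    (hdd : Y ⊆ extC {p ∈ graphOf μ | p.2 ⊂ C} X) :
    IsCover μ (insert (Y, C) (α \ {(X, C)})) ∧
    (insert (Y, C) (α \ {(X, C)})).ncard = α.ncard ∧
    NonredundantCover μ (insert (Y, C) (α \ {(X, C)})) :=
  exchange_cover_general μ hμ α β hα hβ X Y C hX hY hdd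
end
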